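/- arXiv:1610.02080 — 4 statements merged into one kernel-verified Lean document; each statement's English description precedes it below -/
import Mathlib

section
/- Let x = (x_1,…,x_d) be a random vector and Y = f(x) square-integrable with Y measurable with respect to σ(x_1,…,x_d). Define two games: val(u) = Var(E[Y | x_u]) and val'(u) = E[Var(Y | x_{−u})], where −u denotes the complement of u in {1,…,d}, val(∅) = val'(∅) = 0, and Var(Y|G) denotes conditional variance. Then for every j, the Shapley value of player j computed from val equals the Shapley value of player j computed from val'. -/
/-!
By the law of total variance, `E[Var(Y ∣ x_{-u})] = Var(Y) - Var(E[Y ∣ x_{-u}])`, so the second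
game is the dual `u ↦ c - val uᶜ` of the first, up to the constant `c = Var(Y)`. Shapley values
are invariant under passing to such a dual: the bijection `u ↦ (univ \ {j}) \ u` on coalitions
avoiding `j` exchanges the marginal contribution `val (insert j u) - val u` with
`val uᶜ - val (insert j u)ᶜ` and preserves the binomial weight by `C(d-1, k) = C(d-1, d-1-k)`.
-/

open Finset MeasureTheory ProbabilityTheory

/-- The Shapley value of player `j` for the cooperative game `val` on subsets of `Fin d`. -/
noncomputable def shapley {d : ℕ} (val : Finset (Fin d) → ℝ) (j : Fin d) : ℝ :=
  (d : ℝ)⁻¹ * ∑ u ∈ (Finset.univ.erase j).powerset,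
    ((Nat.choose (d - 1) u.card : ℝ))⁻¹ * (val (insert j u) - val u)

/-- The σ-algebra generated by the variables `x j`, `j ∈ u`. -/
def mGen {Ω : Type*} {d : ℕ} (x : Fin d → Ω → ℝ) (u : Finset (Fin d)) :
    MeasurableSpace Ω :=
  ⨆ j ∈ u, MeasurableSpace.comap (x j) Real.measurableSpace

/-- The conditional variance of `Y` given the σ-algebra `m`, as a function on `Ω`. -/
noncomputable def condVar {Ω : Type*} [MeasurableSpace Ω] (μ : Measure Ω)
    (m : MeasurableSpace Ω) (Y : Ω → ℝ) : Ω → ℝ :=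
  μ[fun ω => (Y ω - (μ[Y | m]) ω) ^ 2 | m]

namespace Finset

variable {α : Type*} [Fintype α] [DecidableEq α]

lemma erase_univ_sdiff_eq_compl_insert (j : α) (u : Finset α) :
    univ.erase j \ u = (insert j u)ᶜ := by
  ext i
  simp [and_comm]

lemma insert_erase_univ_sdiff_eq_compl {j : α} {u : Finset α} (hj : j ∉ u) :
    insert j (univ.erase j \ u) = uᶜ := by
  ext i
  by_cases hij : i = j
  · simp [hij, hj]
  · simp [hij]

end Finset

lemma choose_card_erase_univ_sdiff {d : ℕ} {j : Fin d} {u : Finset (Fin d)}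
    (hu : u ⊆ univ.erase j) : (d - 1).choose (univ.erase j \ u).card = (d - 1).choose u.card := by
  have hcard : (univ.erase j).card = d - 1 := by simp
  rw [card_sdiff_of_subset hu, hcard]
  exact Nat.choose_symm (hcard ▸ card_le_card hu)

theorem shapley_const_sub_compl {d : ℕ} (c : ℝ) (val : Finset (Fin d) → ℝ) (j : Fin d) :
    shapley (fun u => c - val uᶜ) j = shapley val j := by
  unfold shapley
  congr 1
  refine sum_nbij' (fun u => univ.erase j \ u) (fun u => univ.erase j \ u)
    (fun _ _ => mem_powerset.2 sdiff_subset) (fun _ _ => mem_powerset.2 sdiff_subset)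
    (fun u hu => Finset.sdiff_sdiff_eq_self (mem_powerset.1 hu))
    (fun u hu => Finset.sdiff_sdiff_eq_self (mem_powerset.1 hu)) fun u hu => ?_
  have hu : u ⊆ univ.erase j := mem_powerset.1 hu
  have hj : j ∉ u := fun h => (mem_erase.1 (hu h)).1 rfl
  rw [choose_card_erase_univ_sdiff hu, insert_erase_univ_sdiff_eq_compl hj,
    erase_univ_sdiff_eq_compl_insert]
  ring

lemma mGen_le {Ω : Type*} [m0 : MeasurableSpace Ω] {d : ℕ} {x : Fin d → Ω → ℝ}
    (hx : ∀ j, Measurable (x j)) (u : Finset (Fin d)) : mGen x u ≤ m0 :=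
  iSup₂_le fun j _ => (hx j).comap_le

-- `condVar μ m Y` is definitionally Mathlib's `Var[Y; μ | m]`.
lemma integral_condVar_eq_variance_sub {Ω : Type*} {m : MeasurableSpace Ω}
    [m0 : MeasurableSpace Ω] {μ : Measure Ω} [IsProbabilityMeasure μ] {Y : Ω → ℝ}
    (hm : m ≤ m0) (hY2 : MemLp Y 2 μ) :
    ∫ ω, _root_.condVar μ m Y ω ∂μ = variance Y μ - variance (μ[Y | m]) μ :=
  eq_sub_of_add_eq (integral_condVar_add_variance_condExp hm hY2)

theorem shapley_var_condexp_eq_shapley_expected_condVar_general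
    {Ω : Type*} [m0 : MeasurableSpace Ω] (μ : Measure Ω) [IsProbabilityMeasure μ]
    (d : ℕ) (x : Fin d → Ω → ℝ) (hx : ∀ j, Measurable (x j))
    (Y : Ω → ℝ) (hY2 : MemLp Y 2 μ)
    (j : Fin d) :
    shapley (fun u => variance (μ[Y | mGen x u]) μ) j
      = shapley (fun u => ∫ ω, condVar μ (mGen x uᶜ) Y ω ∂μ) j := by
  have hdual : (fun u => ∫ ω, condVar μ (mGen x uᶜ) Y ω ∂μ)
      = fun u => variance Y μ - variance (μ[Y | mGen x uᶜ]) μ :=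
    funext fun u => integral_condVar_eq_variance_sub (mGen_le hx uᶜ) hY2
  rw [hdual]
  exact (shapley_const_sub_compl _ (fun u => variance (μ[Y | mGen x u]) μ) j).symm

/-- The Shapley values of the game `val u = Var(E[Y ∣ x_u])` coincide with those of
the dual game `val' u = E[Var(Y ∣ x_{-u})]`. -/
theorem shapley_var_condexp_eq_shapley_expected_condVar
    {Ω : Type*} [m0 : MeasurableSpace Ω] (μ : Measure Ω) [IsProbabilityMeasure μ]
    (d : ℕ) (x : Fin d → Ω → ℝ) (hx : ∀ j, Measurable (x j))
    (Y : Ω → ℝ) (hY2 : MemLp Y 2 μ)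
    (hYmeas : Measurable[mGen x Finset.univ] Y) (j : Fin d) :
    shapley (fun u => variance (μ[Y | mGen x u]) μ) j
      = shapley (fun u => ∫ ω, condVar μ (mGen x uᶜ) Y ω ∂μ) j :=
  shapley_var_condexp_eq_shapley_expected_condVar_general (m0 := m0) μ d x hx Y hY2 j
end

section
/- Let Σ ∈ ℝ^{d×d} be symmetric positive definite and β ∈ ℝ^d, and for u ⊆ {1,…,d} define val(u) = βᵀΣβ − β_{−u}ᵀ(Σ_{−u,−u} − Σ_{−u,u}Σ_{uu}^{-1}Σ_{u,−u})β_{−u} (with val(∅) = 0 and val({1,…,d}) = βᵀΣβ); for Gaussian x ~ N(μ,Σ) this is Var(E[β₀ + βᵀx | x_u]). Then the Shapley value of player j equals φ_j = (1/d) Σ_{u ⊆ {1,…,d}\{j}} C(d−1,|u|)^{-1} ((Σ_{j,−u} − Σ_{j,u}Σ_{uu}^{-1}Σ_{u,−u})β_{−u})² / (Σ_{jj} − Σ_{j,u}Σ_{uu}^{-1}Σ_{u,j}). -/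
open Finset Matrix

/-- The submatrix of `A` with rows indexed by `s` and columns indexed by `t`. -/
def subm {d : ℕ} (A : Matrix (Fin d) (Fin d) ℝ) (s t : Finset (Fin d)) :
    Matrix s t ℝ :=
  A.submatrix (fun i => (i : Fin d)) (fun k => (k : Fin d))

/-- The Schur complement `Σ_{-w,-w} - Σ_{-w,w} Σ_{w,w}⁻¹ Σ_{w,-w}`, i.e. the conditional
covariance matrix of `x_{-w}` given `x_w` for a Gaussian vector with covariance `A`. -/
noncomputable def schurCompl {d : ℕ} (A : Matrix (Fin d) (Fin d) ℝ)
    (w : Finset (Fin d)) : Matrix (wᶜ : Finset (Fin d)) (wᶜ : Finset (Fin d)) ℝ :=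
  subm A wᶜ wᶜ - subm A wᶜ w * (subm A w w)⁻¹ * subm A w wᶜ

/-- The row vector of conditional covariances of `x_j` with `x_{-u}` given `x_u`:
`Σ_{j,-u} - Σ_{j,u} Σ_{u,u}⁻¹ Σ_{u,-u}`. -/
noncomputable def condCovRow {d : ℕ} (A : Matrix (Fin d) (Fin d) ℝ)
    (u : Finset (Fin d)) (j : Fin d) : (uᶜ : Finset (Fin d)) → ℝ :=
  fun k => A j k - ∑ a : u, ∑ b : u, A j a * (subm A u u)⁻¹ a b * A b k

/-- The conditional variance of `x_j` given `x_u`: `Σ_{jj} - Σ_{j,u} Σ_{u,u}⁻¹ Σ_{u,j}`. -/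
noncomputable def condVarGauss {d : ℕ} (A : Matrix (Fin d) (Fin d) ℝ)
    (u : Finset (Fin d)) (j : Fin d) : ℝ :=
  A j j - ∑ a : u, ∑ b : u, A j a * (subm A u u)⁻¹ a b * A b j

/-- The restriction of the coefficient vector `β` to the index set `s`. -/
def restr {d : ℕ} (β : Fin d → ℝ) (s : Finset (Fin d)) : s → ℝ := fun i => β i

/-! For `u ⊆ {1,…,d}` let `r_u = R_u β` be `β` minus its `A`-orthogonal projection onto the
coordinates in `u`: `r_u` agrees with `β` off `u` and `A r_u` vanishes on `u`, which determines it
since `A` is positive definite. In these terms the Schur-complement form is `βᵀ A r_u`, the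
conditional covariance of `x_j` with `x_{-u}ᵀβ_{-u}` is `(A r_u)_j`, and the conditional variance of
`x_j` is `(A q)_j` with `q = R_u e_j`. Adding `j ∉ u` to `u` is one Gram–Schmidt step,
`r_{u ∪ {j}} = r_u - ((A r_u)_j / (A q)_j) q`, so `val (u ∪ {j}) - val u = (A r_u)_j ^ 2 / (A q)_j`,
which is the claimed Shapley summand. -/

theorem sum_coe_compl_eq_sum {n M : Type*} [Fintype n] [DecidableEq n] [AddCommMonoid M]
    {u : Finset n} {f : n → M} (hf : ∀ a ∈ u, f a = 0) :
    ∑ k : (uᶜ : Finset n), f k = ∑ k, f k := by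
  rw [Finset.sum_coe_sort, ← Finset.sum_compl_add_sum u, Finset.sum_eq_zero hf, add_zero]

theorem dotProduct_congr_of_eqOn_compl {n R : Type*} [Fintype n] [NonUnitalNonAssocSemiring R]
    (u : Finset n) {x x' w : n → R} (hx : ∀ k ∉ u, x k = x' k) (hw : ∀ a ∈ u, w a = 0) :
    x ⬝ᵥ w = x' ⬝ᵥ w := by
  refine Finset.sum_congr rfl fun k _ => ?_
  by_cases hk : k ∈ u
  · simp [hw k hk]
  · rw [hx k hk]

theorem mul_one_submatrix_id {m n o α : Type*} [Fintype n] [DecidableEq n] [NonAssocSemiring α]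
    (M : Matrix m n α) (e : o → n) : M * (1 : Matrix n n α).submatrix id e = M.submatrix id e := by
  simpa using mul_submatrix_one (Equiv.refl n) e M

theorem Matrix.IsSymm.dotProduct_mulVec_comm {n R : Type*} [Fintype n] [CommSemiring R]
    {A : Matrix n n R} (hA : A.IsSymm) (x y : n → R) : x ⬝ᵥ A *ᵥ y = y ⬝ᵥ A *ᵥ x := by
  rw [dotProduct_mulVec, ← mulVec_transpose, hA.eq, dotProduct_comm]

theorem Matrix.PosDef.isUnit_det_submatrix {n : Type*} [Fintype n] [DecidableEq n]
    {A : Matrix n n ℝ} (hA : A.PosDef) (u : Finset n) :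
    IsUnit (A.submatrix (↑) (↑) : Matrix u u ℝ).det :=
  (hA.submatrix Subtype.val_injective).det_pos.ne'.isUnit

section CondResidual

variable {n : Type*} [DecidableEq n] (A : Matrix n n ℝ) (u : Finset n)

/-- `condResidual A u *ᵥ y` is `y` minus its `A`-orthogonal projection onto the coordinates in
`u`; for `x ~ N(0, A)` it is the coefficient vector of the residual `yᵀx - E[yᵀx ∣ x_u]`, and
`A * condResidual A u` is the conditional covariance matrix of `x` given `x_u`. -/
noncomputable def condResidual : Matrix n n ℝ :=
  1 - (1 : Matrix n n ℝ).submatrix id ((↑) : u → n) * (A.submatrix (↑) (↑) : Matrix u u ℝ)⁻¹ *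
    (A.submatrix (↑) id : Matrix u n ℝ)

theorem condResidual_apply_of_notMem {i : n} (hi : i ∉ u) (k : n) :
    condResidual A u i k = (1 : Matrix n n ℝ) i k := by
  have hE : ∀ b : u, i ≠ b := fun b h => hi (h ▸ b.2)
  simp [condResidual, Matrix.sub_apply, mul_apply, Matrix.one_apply, hE]

variable [Fintype n]

theorem mul_condResidual :
    A * condResidual A u = A - (A.submatrix id (↑) : Matrix n u ℝ) *
      (A.submatrix (↑) (↑) : Matrix u u ℝ)⁻¹ * (A.submatrix (↑) id : Matrix u n ℝ) := by
  rw [condResidual, Matrix.mul_sub, Matrix.mul_one, ← Matrix.mul_assoc, ← Matrix.mul_assoc,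
    mul_one_submatrix_id]

theorem mul_condResidual_apply (i k : n) :
    (A * condResidual A u) i k =
      A i k - ∑ a : u, ∑ b : u, A i a * (A.submatrix (↑) (↑) : Matrix u u ℝ)⁻¹ a b * A b k := by
  rw [mul_condResidual, Matrix.sub_apply, mul_apply, Finset.sum_comm]
  simp only [mul_apply, submatrix_apply, id, Finset.sum_mul]

theorem condResidual_mulVec_apply_of_notMem (y : n → ℝ) ⦃k : n⦄ (hk : k ∉ u) :
    (condResidual A u *ᵥ y) k = y k := by
  simp [mulVec, dotProduct, condResidual_apply_of_notMem A u hk, Matrix.one_apply]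

variable {A u}

theorem condResidual_apply_of_mem_right (hu : IsUnit (A.submatrix (↑) (↑) : Matrix u u ℝ).det)
    (i : n) {a : n} (ha : a ∈ u) : condResidual A u i a = 0 := by
  have h : (condResidual A u).submatrix id ((↑) : u → n) = 0 := by
    rw [← mul_one_submatrix_id, condResidual, Matrix.sub_mul, Matrix.one_mul, Matrix.mul_assoc,
      mul_one_submatrix_id, submatrix_submatrix, Function.id_comp, Function.comp_id,
      Matrix.mul_assoc, nonsing_inv_mul _ hu, Matrix.mul_one, sub_self]
  simpa using congrFun (congrFun h i) ⟨a, ha⟩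

theorem mul_condResidual_apply_of_mem_right
    (hu : IsUnit (A.submatrix (↑) (↑) : Matrix u u ℝ).det) (i : n) {a : n} (ha : a ∈ u) :
    (A * condResidual A u) i a = 0 := by
  simp [mul_apply, condResidual_apply_of_mem_right hu _ ha]

theorem mul_condResidual_apply_of_mem (hu : IsUnit (A.submatrix (↑) (↑) : Matrix u u ℝ).det)
    {a : n} (ha : a ∈ u) (k : n) : (A * condResidual A u) a k = 0 := by
  have h : (A * condResidual A u).submatrix ((↑) : u → n) id = 0 := by
    rw [submatrix_mul _ _ _ id _ Function.bijective_id, submatrix_id_id, condResidual,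
      Matrix.mul_sub, Matrix.mul_one, ← Matrix.mul_assoc, ← Matrix.mul_assoc,
      mul_one_submatrix_id, submatrix_submatrix, Function.id_comp, Function.comp_id,
      mul_nonsing_inv _ hu, Matrix.one_mul, sub_self]
  simpa using congrFun (congrFun h ⟨a, ha⟩) k

theorem mulVec_condResidual_mulVec_apply_of_mem
    (hu : IsUnit (A.submatrix (↑) (↑) : Matrix u u ℝ).det) (y : n → ℝ) ⦃a : n⦄ (ha : a ∈ u) :
    (A *ᵥ (condResidual A u *ᵥ y)) a = 0 := by
  rw [mulVec_mulVec]
  simp [mulVec, dotProduct, mul_condResidual_apply_of_mem hu ha]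

theorem sum_compl_mul_condResidual_apply_mul
    (hu : IsUnit (A.submatrix (↑) (↑) : Matrix u u ℝ).det) (i : n) (y : n → ℝ) :
    ∑ k : (uᶜ : Finset n), (A * condResidual A u) i k * y k =
      (A *ᵥ (condResidual A u *ᵥ y)) i := by
  rw [sum_coe_compl_eq_sum (f := fun k => (A * condResidual A u) i k * y k)
    fun a ha => by rw [mul_condResidual_apply_of_mem_right hu i ha, zero_mul], mulVec_mulVec]
  rfl

theorem eq_condResidual_mulVec (hA : A.PosDef) {y r : n → ℝ} (hoff : ∀ k ∉ u, r k = y k)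
    (hon : ∀ a ∈ u, (A *ᵥ r) a = 0) : r = condResidual A u *ᵥ y := by
  have hu := hA.isUnit_det_submatrix u
  set v := r - condResidual A u *ᵥ y
  have hv : ∀ k ∉ u, v k = (0 : n → ℝ) k := fun k hk => by
    simp [v, hoff k hk, condResidual_mulVec_apply_of_notMem A u y hk]
  have hAv : ∀ a ∈ u, (A *ᵥ v) a = 0 := fun a ha => by
    rw [mulVec_sub, Pi.sub_apply, hon a ha, mulVec_condResidual_mulVec_apply_of_mem hu y ha,
      sub_zero]
  by_contra hne
  have hpos := hA.dotProduct_mulVec_pos (sub_ne_zero.mpr hne)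
  rw [star_trivial, dotProduct_congr_of_eqOn_compl u hv hAv, zero_dotProduct] at hpos
  exact hpos.false

theorem mul_condResidual_apply_self_pos (hA : A.PosDef) {j : n} (hj : j ∉ u) :
    0 < (A * condResidual A u) j j := by
  set q := condResidual A u *ᵥ Pi.single j 1
  have hq : ∀ k ∉ u, q k = (Pi.single j 1 : n → ℝ) k := fun k hk =>
    condResidual_mulVec_apply_of_notMem A u (Pi.single j 1) hk
  have hq0 : q ≠ 0 := fun h => by simpa [h] using hq j hj
  have hpos := hA.dotProduct_mulVec_pos hq0
  rwa [star_trivial, dotProduct_congr_of_eqOn_compl u hq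
    (mulVec_condResidual_mulVec_apply_of_mem (hA.isUnit_det_submatrix u) _),
    single_one_dotProduct, mulVec_mulVec, mulVec_single_one] at hpos

theorem dotProduct_mulVec_condResidual_mulVec_single (hA : A.PosDef) (y : n → ℝ) (j : n) :
    y ⬝ᵥ A *ᵥ (condResidual A u *ᵥ Pi.single j 1) = (A *ᵥ (condResidual A u *ᵥ y)) j := by
  have hu := hA.isUnit_det_submatrix u
  have hsymm : A.IsSymm := isHermitian_iff_isSymm.mp hA.isHermitian
  calc y ⬝ᵥ A *ᵥ (condResidual A u *ᵥ Pi.single j 1)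
      = (condResidual A u *ᵥ y) ⬝ᵥ A *ᵥ (condResidual A u *ᵥ Pi.single j 1) :=
        dotProduct_congr_of_eqOn_compl u
          (fun k hk => (condResidual_mulVec_apply_of_notMem A u y hk).symm)
          (mulVec_condResidual_mulVec_apply_of_mem hu _)
    _ = (condResidual A u *ᵥ Pi.single j 1) ⬝ᵥ A *ᵥ (condResidual A u *ᵥ y) :=
        hsymm.dotProduct_mulVec_comm _ _
    _ = Pi.single j 1 ⬝ᵥ A *ᵥ (condResidual A u *ᵥ y) :=
        dotProduct_congr_of_eqOn_compl u (condResidual_mulVec_apply_of_notMem A u _)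
          (mulVec_condResidual_mulVec_apply_of_mem hu _)
    _ = (A *ᵥ (condResidual A u *ᵥ y)) j := single_one_dotProduct _ _

theorem condResidual_insert_mulVec (hA : A.PosDef) {j : n} (hj : j ∉ u) (y : n → ℝ) :
    condResidual A (insert j u) *ᵥ y = condResidual A u *ᵥ y -
      ((A *ᵥ (condResidual A u *ᵥ y)) j / (A * condResidual A u) j j) •
        condResidual A u *ᵥ Pi.single j 1 := by
  have hu := hA.isUnit_det_submatrix u
  have hY : (A *ᵥ (condResidual A u *ᵥ Pi.single j 1)) j = (A * condResidual A u) j j := by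
    rw [mulVec_mulVec, mulVec_single_one]
    rfl
  refine (eq_condResidual_mulVec hA (fun k hk => ?_) fun a ha => ?_).symm
  · rw [mem_insert, not_or] at hk
    rw [Pi.sub_apply, Pi.smul_apply, condResidual_mulVec_apply_of_notMem A u _ hk.2,
      condResidual_mulVec_apply_of_notMem A u _ hk.2, Pi.single_eq_of_ne hk.1, smul_zero, sub_zero]
  · rw [mulVec_sub, mulVec_smul, Pi.sub_apply, Pi.smul_apply, smul_eq_mul]
    rcases mem_insert.mp ha with rfl | ha
    · rw [hY, div_mul_cancel₀ _ (mul_condResidual_apply_self_pos hA hj).ne', sub_self]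
    · rw [mulVec_condResidual_mulVec_apply_of_mem hu _ ha,
        mulVec_condResidual_mulVec_apply_of_mem hu _ ha, mul_zero, sub_zero]

theorem dotProduct_mulVec_condResidual_sub_insert (hA : A.PosDef) {j : n} (hj : j ∉ u)
    (y : n → ℝ) :
    y ⬝ᵥ A *ᵥ (condResidual A u *ᵥ y) - y ⬝ᵥ A *ᵥ (condResidual A (insert j u) *ᵥ y) =
      (A *ᵥ (condResidual A u *ᵥ y)) j ^ 2 / (A * condResidual A u) j j := by
  rw [condResidual_insert_mulVec hA hj, mulVec_sub, mulVec_smul, dotProduct_sub, dotProduct_smul,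
    dotProduct_mulVec_condResidual_mulVec_single hA, smul_eq_mul, sub_sub_cancel,
    div_mul_eq_mul_div, sq]

end CondResidual

section

variable {d : ℕ} {A : Matrix (Fin d) (Fin d) ℝ} {u : Finset (Fin d)}

theorem condVarGauss_eq_mul_condResidual_apply (j : Fin d) :
    condVarGauss A u j = (A * condResidual A u) j j :=
  (mul_condResidual_apply A u j j).symm

theorem condCovRow_dotProduct_restr (hu : IsUnit (subm A u u).det) (β : Fin d → ℝ)
    (j : Fin d) :
    condCovRow A u j ⬝ᵥ restr β uᶜ = (A *ᵥ (condResidual A u *ᵥ β)) j := by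
  rw [← sum_compl_mul_condResidual_apply_mul hu]
  exact Finset.sum_congr rfl fun k _ => by rw [mul_condResidual_apply]; rfl

theorem restr_dotProduct_schurCompl_mulVec (hu : IsUnit (subm A u u).det) (β : Fin d → ℝ) :
    restr β uᶜ ⬝ᵥ schurCompl A u *ᵥ restr β uᶜ = β ⬝ᵥ A *ᵥ (condResidual A u *ᵥ β) := by
  have hrow : ∀ k : (uᶜ : Finset (Fin d)),
      (schurCompl A u *ᵥ restr β uᶜ) k = (A *ᵥ (condResidual A u *ᵥ β)) k := fun k => by
    rw [← sum_compl_mul_condResidual_apply_mul hu]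
    refine Finset.sum_congr rfl fun l _ => ?_
    rw [mul_condResidual_apply]
    simp only [schurCompl, subm, Matrix.sub_apply, mul_apply, submatrix_apply, Finset.sum_mul]
    rw [Finset.sum_comm]
    rfl
  rw [dotProduct, dotProduct, ← sum_coe_compl_eq_sum
    (f := fun k => β k * (A *ᵥ (condResidual A u *ᵥ β)) k) fun a ha => by
      rw [mulVec_condResidual_mulVec_apply_of_mem hu β ha, mul_zero]]
  exact Finset.sum_congr rfl fun k _ => by rw [hrow]; rfl

end

/-- Shapley effects for a linear function `β₀ + βᵀx` of a Gaussian vector `x ~ N(μ, Σ)`: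
with `val u = Var(E[βᵀx ∣ x_u]) = βᵀΣβ - β_{-u}ᵀ(Σ_{-u,-u} - Σ_{-u,u}Σ_{uu}⁻¹Σ_{u,-u})β_{-u}`,
the Shapley value of variable `j` is
`(1/d) ∑_{u ⊆ -{j}} C(d-1,|u|)⁻¹ Cov(x_j, x_{-u}ᵀβ_{-u} ∣ x_u)² / Var(x_j ∣ x_u)`. -/
theorem shapley_gaussian_linear {d : ℕ} (A : Matrix (Fin d) (Fin d) ℝ)
    (hA : A.PosDef) (β : Fin d → ℝ) (j : Fin d) :
    shapley (fun u =>
        β ⬝ᵥ A.mulVec β - restr β uᶜ ⬝ᵥ (schurCompl A u).mulVec (restr β uᶜ)) j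
      = (d : ℝ)⁻¹ * ∑ u ∈ (Finset.univ.erase j).powerset,
          ((Nat.choose (d - 1) u.card : ℝ))⁻¹ *
            ((condCovRow A u j ⬝ᵥ restr β uᶜ) ^ 2 / condVarGauss A u j) := by
  rw [shapley]
  refine congrArg _ (Finset.sum_congr rfl fun u hu => congrArg _ ?_)
  have hj : j ∉ u := fun h => (mem_erase.mp (mem_powerset.mp hu h)).1 rfl
  rw [restr_dotProduct_schurCompl_mulVec (hA.isUnit_det_submatrix _),
    restr_dotProduct_schurCompl_mulVec (hA.isUnit_det_submatrix _),
    condCovRow_dotProduct_restr (hA.isUnit_det_submatrix _), condVarGauss_eq_mul_condResidual_apply,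
    ← dotProduct_mulVec_condResidual_sub_insert hA hj]
  ring
end

section
/- Let F_1, F_2 be continuously differentiable cumulative distribution functions on ℝ with densities F_1', F_2', and let (x_1,x_2) have joint density F_1'(x_1)F_2'(x_2)(1 + θ(1−2F_1(x_1))(1−2F_2(x_2))) with −1 ≤ θ ≤ 1, where x_2 is integrable and ∫ y(1−2F_2(y))F_2'(y) dy is finite. Then E[x_2 | x_1] = E[x_2] + θ(1 − 2F_1(x_1)) ∫_ℝ y(1 − 2F_2(y)) F_2'(y) dy almost surely. -/
open MeasureTheory ProbabilityTheory Filter Topology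

/-! Write `uᵢ = 1 - 2Fᵢ`. The FGM density is `F₁'F₂' + θ (u₁F₁')(u₂F₂')`, and `uᵢFᵢ'` is the
derivative of `Fᵢ - Fᵢ²`, which tends to `0` at both ends, so `∫ uᵢFᵢ' = 0` while `∫ Fᵢ' = 1`.
Integrating out `x₂` against `1` and against `y` gives `F₁'(x)` and `F₁'(x) (m + θ u₁(x) I)`,
where `m = ∫ y F₂'(y) dy` and `I = ∫ y u₂(y) F₂'(y) dy`. Their ratio `m + θ u₁(x) I` is the
conditional mean, and integrating it against `F₁'` shows `m = E[x₂]`. -/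

/-- The bivariate measure obtained by coupling the margins `F₁, F₂` (with densities
`F₁', F₂'`) by the Farlie–Gumbel–Morgenstern copula with parameter `θ`: its joint
density is `F₁'(x₁)F₂'(x₂)(1 + θ(1-2F₁(x₁))(1-2F₂(x₂)))`. -/
noncomputable def fgmMargins (F₁ F₂ : ℝ → ℝ) (θ : ℝ) : Measure (ℝ × ℝ) :=
  (volume : Measure (ℝ × ℝ)).withDensity fun p =>
    ENNReal.ofReal (deriv F₁ p.1 * deriv F₂ p.2 *
      (1 + θ * (1 - 2 * F₁ p.1) * (1 - 2 * F₂ p.2)))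

section WithDensity

variable {X : Type*} [MeasurableSpace X] {μ : Measure X} {ρ : X → ℝ}

lemma integrable_withDensity_ofReal_iff (hρ : Measurable ρ) (hρ0 : ∀ x, 0 ≤ ρ x) {g : X → ℝ} :
    Integrable g (μ.withDensity fun x => ENNReal.ofReal (ρ x))
      ↔ Integrable (fun x => ρ x * g x) μ := by
  simp only [integrable_withDensity_iff_integrable_smul' hρ.ennreal_ofReal
    (ae_of_all _ fun _ => ENNReal.ofReal_lt_top), ENNReal.toReal_ofReal (hρ0 _), smul_eq_mul]

lemma setIntegral_withDensity_ofReal (hρ : Measurable ρ) (hρ0 : ∀ x, 0 ≤ ρ x) (g : X → ℝ)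
    {s : Set X} (hs : MeasurableSet s) :
    ∫ x in s, g x ∂μ.withDensity (fun x => ENNReal.ofReal (ρ x)) = ∫ x in s, ρ x * g x ∂μ := by
  simp only [setIntegral_withDensity_eq_setIntegral_toReal_smul hρ.ennreal_ofReal
    (ae_of_all _ fun _ => ENNReal.ofReal_lt_top) g hs, ENNReal.toReal_ofReal (hρ0 _), smul_eq_mul]

end WithDensity

section ConditionalDensity

variable {α β : Type*} [MeasurableSpace α] [MeasurableSpace β] {ν : Measure α} {κ : Measure β}
  [SFinite ν] [SFinite κ] {ρ : α × β → ℝ}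

lemma setIntegral_fst_preimage_withDensity_ofReal (hρ : Measurable ρ) (hρ0 : ∀ p, 0 ≤ ρ p)
    {g : α × β → ℝ} (hg : Integrable g ((ν.prod κ).withDensity fun p => ENNReal.ofReal (ρ p)))
    {A : Set α} (hA : MeasurableSet A) :
    ∫ p in Prod.fst ⁻¹' A, g p ∂(ν.prod κ).withDensity (fun p => ENNReal.ofReal (ρ p))
      = ∫ x in A, ∫ y, ρ (x, y) * g (x, y) ∂κ ∂ν := by
  rw [setIntegral_withDensity_ofReal hρ hρ0 g (measurable_fst hA), ← Set.prod_univ,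
    setIntegral_prod _ ((integrable_withDensity_ofReal_iff hρ hρ0).1 hg).integrableOn]
  simp only [Measure.restrict_univ]

theorem condExp_comp_snd_ae_eq_of_withDensity {μ : Measure (α × β)} [IsFiniteMeasure μ]
    (hμ : μ = (ν.prod κ).withDensity fun p => ENNReal.ofReal (ρ p))
    (hρ : Measurable ρ) (hρ0 : ∀ p, 0 ≤ ρ p) {f : β → ℝ} {φ : α → ℝ}
    (hf : Integrable (fun p => f p.2) μ) (hφ : StronglyMeasurable φ)
    (hφint : Integrable (fun p => φ p.1) μ)
    (hfφ : ∀ᵐ x ∂ν, ∫ y, ρ (x, y) * f y ∂κ = (∫ y, ρ (x, y) ∂κ) * φ x) :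
    μ[fun p => f p.2 | MeasurableSpace.comap Prod.fst ‹_›] =ᵐ[μ] fun p => φ p.1 := by
  have hφm : StronglyMeasurable[MeasurableSpace.comap Prod.fst ‹_›] fun p : α × β => φ p.1 :=
    hφ.comp_measurable (Measurable.of_comap_le le_rfl)
  refine (ae_eq_condExp_of_forall_setIntegral_eq measurable_fst.comap_le hf
    (fun _ _ _ => hφint.integrableOn) ?_ hφm.aestronglyMeasurable).symm
  rintro _ ⟨A, hA, rfl⟩ -
  subst hμ
  rw [setIntegral_fst_preimage_withDensity_ofReal hρ hρ0 hφint hA,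
    setIntegral_fst_preimage_withDensity_ofReal hρ hρ0 hf hA]
  refine setIntegral_congr_ae hA (hfφ.mono fun x hx _ => ?_)
  rw [hx, ← integral_mul_const]

end ConditionalDensity

lemma integrable_deriv_of_monotone {F : ℝ → ℝ} (hd : Differentiable ℝ F) (hm : Monotone F)
    {a b : ℝ} (hbot : Tendsto F atBot (𝓝 a)) (htop : Tendsto F atTop (𝓝 b)) :
    Integrable (deriv F) := by
  have hint (s t : ℝ) : IntervalIntegrable (deriv F) volume s t :=
    intervalIntegral.intervalIntegrable_deriv_of_nonneg hd.continuous.continuousOn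
      (fun x _ => (hd x).hasDerivAt) fun _ _ => hm.deriv_nonneg
  have hn : Tendsto (fun n : ℕ => (n : ℝ)) atTop atTop := tendsto_natCast_atTop_atTop
  refine integrable_of_intervalIntegral_norm_bounded (b - a)
    (fun n => (hint _ _).1) (tendsto_neg_atBot_iff.mpr hn) hn (Eventually.of_forall fun n => ?_)
  simp only [Real.norm_of_nonneg hm.deriv_nonneg]
  rw [intervalIntegral.integral_deriv_eq_sub (fun x _ => hd x) (hint _ _)]
  linarith [hm.ge_of_tendsto htop (n : ℝ), hm.le_of_tendsto hbot (-n : ℝ)]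

structure IsC1CDF (F : ℝ → ℝ) : Prop where
  contDiff : ContDiff ℝ 1 F
  monotone : Monotone F
  tendsto_atBot : Tendsto F atBot (𝓝 0)
  tendsto_atTop : Tendsto F atTop (𝓝 1)

namespace IsC1CDF

variable {F : ℝ → ℝ}

lemma differentiable (hF : IsC1CDF F) : Differentiable ℝ F :=
  hF.contDiff.differentiable one_ne_zero

lemma continuous_deriv (hF : IsC1CDF F) : Continuous (deriv F) :=
  hF.contDiff.continuous_deriv le_rfl

lemma abs_one_sub_two_mul_le (hF : IsC1CDF F) (x : ℝ) : |1 - 2 * F x| ≤ 1 := by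
  have h0 := hF.monotone.le_of_tendsto hF.tendsto_atBot x
  have h1 := hF.monotone.ge_of_tendsto hF.tendsto_atTop x
  rw [abs_le]; constructor <;> linarith

lemma integrable_deriv (hF : IsC1CDF F) : Integrable (deriv F) :=
  integrable_deriv_of_monotone hF.differentiable hF.monotone hF.tendsto_atBot hF.tendsto_atTop

lemma integral_deriv (hF : IsC1CDF F) : ∫ x, deriv F x = 1 := by
  simpa using integral_of_hasDerivAt_of_tendsto (fun x => (hF.differentiable x).hasDerivAt)
    hF.integrable_deriv hF.tendsto_atBot hF.tendsto_atTop

lemma integrable_one_sub_two_mul_mul_deriv (hF : IsC1CDF F) :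
    Integrable fun x => (1 - 2 * F x) * deriv F x := by
  refine hF.integrable_deriv.mono' ?_ (Eventually.of_forall fun x => ?_)
  · exact ((continuous_const.sub (continuous_const.mul hF.differentiable.continuous)).mul
      hF.continuous_deriv).aestronglyMeasurable
  · rw [norm_mul, Real.norm_of_nonneg hF.monotone.deriv_nonneg]
    exact mul_le_of_le_one_left hF.monotone.deriv_nonneg (hF.abs_one_sub_two_mul_le x)

lemma integral_one_sub_two_mul_mul_deriv (hF : IsC1CDF F) :
    ∫ x, (1 - 2 * F x) * deriv F x = 0 := by
  have hderiv : ∀ x, HasDerivAt (fun x => F x - F x ^ 2) ((1 - 2 * F x) * deriv F x) x := by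
    intro x
    have h := (hF.differentiable x).hasDerivAt
    exact (h.sub (h.pow 2)).congr_deriv (by norm_num; ring)
  simpa using integral_of_hasDerivAt_of_tendsto (m := 0) (n := 0) hderiv
    hF.integrable_one_sub_two_mul_mul_deriv
    (by simpa using hF.tendsto_atBot.sub (hF.tendsto_atBot.pow 2))
    (by simpa using hF.tendsto_atTop.sub (hF.tendsto_atTop.pow 2))

lemma integrable_one_sub_two_mul_comp (hF : IsC1CDF F) {X : Type*} [MeasurableSpace X]
    {μ : Measure X} [IsFiniteMeasure μ] {g : X → ℝ} (hg : Measurable g) :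
    Integrable (fun p => 1 - 2 * F (g p)) μ := by
  have hm : Measurable fun p => 1 - 2 * F (g p) :=
    ((hF.differentiable.continuous.measurable.comp hg).const_mul 2).const_sub 1
  exact .of_bound hm.aestronglyMeasurable 1
    (Eventually.of_forall fun p => hF.abs_one_sub_two_mul_le (g p))

end IsC1CDF

noncomputable def fgmDensity (F₁ F₂ : ℝ → ℝ) (θ : ℝ) (p : ℝ × ℝ) : ℝ :=
  deriv F₁ p.1 * deriv F₂ p.2 * (1 + θ * (1 - 2 * F₁ p.1) * (1 - 2 * F₂ p.2))

section FGM

variable {F₁ F₂ : ℝ → ℝ} {θ : ℝ}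

lemma fgmMargins_eq_withDensity : fgmMargins F₁ F₂ θ
    = (volume.prod volume).withDensity fun p => ENNReal.ofReal (fgmDensity F₁ F₂ θ p) := rfl

lemma fgmDensity_mk (x y : ℝ) : fgmDensity F₁ F₂ θ (x, y) = deriv F₁ x * deriv F₂ y
    + θ * ((1 - 2 * F₁ x) * deriv F₁ x) * ((1 - 2 * F₂ y) * deriv F₂ y) := by
  unfold fgmDensity; ring

lemma abs_fgm_dependence_term_le (hF₁ : IsC1CDF F₁) (hF₂ : IsC1CDF F₂) (hθ : |θ| ≤ 1)
    (x y : ℝ) : |θ * (1 - 2 * F₁ x) * (1 - 2 * F₂ y)| ≤ 1 := by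
  rw [abs_mul, abs_mul]
  exact mul_le_one₀ (mul_le_one₀ hθ (abs_nonneg _) (hF₁.abs_one_sub_two_mul_le x))
    (abs_nonneg _) (hF₂.abs_one_sub_two_mul_le y)

lemma fgmDensity_nonneg (hF₁ : IsC1CDF F₁) (hF₂ : IsC1CDF F₂) (hθ : |θ| ≤ 1) (p : ℝ × ℝ) :
    0 ≤ fgmDensity F₁ F₂ θ p :=
  mul_nonneg (mul_nonneg hF₁.monotone.deriv_nonneg hF₂.monotone.deriv_nonneg)
    (by linarith [neg_abs_le (θ * (1 - 2 * F₁ p.1) * (1 - 2 * F₂ p.2)),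
      abs_fgm_dependence_term_le hF₁ hF₂ hθ p.1 p.2])

lemma fgmDensity_le (hF₁ : IsC1CDF F₁) (hF₂ : IsC1CDF F₂) (hθ : |θ| ≤ 1) (p : ℝ × ℝ) :
    fgmDensity F₁ F₂ θ p ≤ 2 * (deriv F₁ p.1 * deriv F₂ p.2) := by
  calc fgmDensity F₁ F₂ θ p
      = deriv F₁ p.1 * deriv F₂ p.2 * (1 + θ * (1 - 2 * F₁ p.1) * (1 - 2 * F₂ p.2)) := rfl
    _ ≤ deriv F₁ p.1 * deriv F₂ p.2 * 2 :=
      mul_le_mul_of_nonneg_left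
        (by linarith [le_abs_self (θ * (1 - 2 * F₁ p.1) * (1 - 2 * F₂ p.2)),
          abs_fgm_dependence_term_le hF₁ hF₂ hθ p.1 p.2])
        (mul_nonneg hF₁.monotone.deriv_nonneg hF₂.monotone.deriv_nonneg)
    _ = 2 * (deriv F₁ p.1 * deriv F₂ p.2) := mul_comm _ _

lemma continuous_fgmDensity (hF₁ : IsC1CDF F₁) (hF₂ : IsC1CDF F₂) :
    Continuous (fgmDensity F₁ F₂ θ) := by
  have hF₁c := hF₁.differentiable.continuous
  have hF₂c := hF₂.differentiable.continuous
  have hf₁c := hF₁.continuous_deriv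
  have hf₂c := hF₂.continuous_deriv
  unfold fgmDensity
  fun_prop

lemma integrable_fgmDensity (hF₁ : IsC1CDF F₁) (hF₂ : IsC1CDF F₂) (hθ : |θ| ≤ 1) :
    Integrable (fgmDensity F₁ F₂ θ) (volume.prod volume) := by
  refine ((hF₁.integrable_deriv.mul_prod hF₂.integrable_deriv).const_mul 2).mono'
    (continuous_fgmDensity hF₁ hF₂).aestronglyMeasurable (Eventually.of_forall fun p => ?_)
  rw [Real.norm_of_nonneg (fgmDensity_nonneg hF₁ hF₂ hθ p)]
  exact fgmDensity_le hF₁ hF₂ hθ p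

lemma integral_fgmDensity_mul_snd (x : ℝ) {g : ℝ → ℝ}
    (h₁ : Integrable fun y => g y * deriv F₂ y)
    (h₂ : Integrable fun y => g y * (1 - 2 * F₂ y) * deriv F₂ y) :
    ∫ y, fgmDensity F₁ F₂ θ (x, y) * g y = deriv F₁ x * ((∫ y, g y * deriv F₂ y)
      + θ * (1 - 2 * F₁ x) * ∫ y, g y * (1 - 2 * F₂ y) * deriv F₂ y) := by
  have hsplit : (fun y => fgmDensity F₁ F₂ θ (x, y) * g y) = fun y =>
      deriv F₁ x * (g y * deriv F₂ y)
        + deriv F₁ x * θ * (1 - 2 * F₁ x) * (g y * (1 - 2 * F₂ y) * deriv F₂ y) := by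
    ext y; rw [fgmDensity_mk]; ring
  rw [hsplit, integral_add (h₁.const_mul _) (h₂.const_mul _), integral_const_mul,
    integral_const_mul]
  ring

lemma integral_fgmDensity_snd (hF₂ : IsC1CDF F₂) (x : ℝ) :
    ∫ y, fgmDensity F₁ F₂ θ (x, y) = deriv F₁ x := by
  have h := integral_fgmDensity_mul_snd (θ := θ) (F₁ := F₁) x (g := fun _ => 1)
    (by simpa using hF₂.integrable_deriv) (by simpa using hF₂.integrable_one_sub_two_mul_mul_deriv)
  simp only [mul_one, one_mul] at h
  rw [h, hF₂.integral_deriv, hF₂.integral_one_sub_two_mul_mul_deriv]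
  ring

lemma integral_fgmDensity_fst (hF₁ : IsC1CDF F₁) (y : ℝ) :
    ∫ x, fgmDensity F₁ F₂ θ (x, y) = deriv F₂ y := by
  simp only [fgmDensity_mk]
  rw [integral_add (hF₁.integrable_deriv.mul_const _)
    ((hF₁.integrable_one_sub_two_mul_mul_deriv.const_mul θ).mul_const _), integral_mul_const,
    integral_mul_const, integral_const_mul, hF₁.integral_deriv,
    hF₁.integral_one_sub_two_mul_mul_deriv]
  ring

lemma isProbabilityMeasure_fgmMargins (hF₁ : IsC1CDF F₁) (hF₂ : IsC1CDF F₂) (hθ : |θ| ≤ 1) :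
    IsProbabilityMeasure (fgmMargins F₁ F₂ θ) := by
  constructor
  rw [fgmMargins_eq_withDensity, withDensity_apply _ MeasurableSet.univ, Measure.restrict_univ,
    ← ofReal_integral_eq_lintegral_ofReal (integrable_fgmDensity hF₁ hF₂ hθ)
      (Eventually.of_forall (fgmDensity_nonneg hF₁ hF₂ hθ)),
    integral_prod _ (integrable_fgmDensity hF₁ hF₂ hθ)]
  simp [integral_fgmDensity_snd hF₂, hF₁.integral_deriv]

lemma integrable_mul_deriv_of_integrable_snd (hF₁ : IsC1CDF F₁) (hF₂ : IsC1CDF F₂)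
    (hθ : |θ| ≤ 1) (hint : Integrable (fun p => p.2) (fgmMargins F₁ F₂ θ)) :
    Integrable fun y => y * deriv F₂ y := by
  have := ((integrable_withDensity_ofReal_iff (continuous_fgmDensity hF₁ hF₂).measurable
    (fgmDensity_nonneg hF₁ hF₂ hθ)).1 hint).integral_prod_right
  refine this.congr (Eventually.of_forall fun y => ?_)
  change ∫ x, fgmDensity F₁ F₂ θ (x, y) * y = y * deriv F₂ y
  rw [integral_mul_const, integral_fgmDensity_fst hF₁, mul_comm]

lemma integral_snd_fgmMargins (hF₁ : IsC1CDF F₁) (hF₂ : IsC1CDF F₂) (hθ : |θ| ≤ 1)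
    (hint : Integrable (fun p => p.2) (fgmMargins F₁ F₂ θ))
    (hint₂ : Integrable fun y => y * (1 - 2 * F₂ y) * deriv F₂ y) :
    ∫ q, q.2 ∂fgmMargins F₁ F₂ θ = ∫ y, y * deriv F₂ y := by
  have hm := integrable_mul_deriv_of_integrable_snd hF₁ hF₂ hθ hint
  calc ∫ q, q.2 ∂fgmMargins F₁ F₂ θ
      = ∫ x, ∫ y, fgmDensity F₁ F₂ θ (x, y) * y := by
        rw [fgmMargins_eq_withDensity]
        simpa using setIntegral_fst_preimage_withDensity_ofReal
          (continuous_fgmDensity hF₁ hF₂).measurable (fgmDensity_nonneg hF₁ hF₂ hθ) hint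
          MeasurableSet.univ
    _ = ∫ x, ((∫ y, y * deriv F₂ y) * deriv F₁ x + θ * (∫ y, y * (1 - 2 * F₂ y) * deriv F₂ y)
          * ((1 - 2 * F₁ x) * deriv F₁ x)) := by
        congr with x
        rw [integral_fgmDensity_mul_snd x hm hint₂]
        ring
    _ = ∫ y, y * deriv F₂ y := by
        rw [integral_add (hF₁.integrable_deriv.const_mul _)
          (hF₁.integrable_one_sub_two_mul_mul_deriv.const_mul _), integral_const_mul,
          integral_const_mul, hF₁.integral_deriv, hF₁.integral_one_sub_two_mul_mul_deriv]
        ring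

end FGM

/-- Conditional expectation formula for the Farlie–Gumbel–Morgenstern coupling of
general continuously differentiable margins `F₁, F₂`:
`E[x₂ ∣ x₁] = E[x₂] + θ(1 - 2F₁(x₁)) ∫ y(1 - 2F₂(y))F₂'(y) dy` almost surely. -/
theorem fgm_general_margins_condexp (F₁ F₂ : ℝ → ℝ) (θ : ℝ)
    (hθ₁ : -1 ≤ θ) (hθ₂ : θ ≤ 1)
    (hF₁ : ContDiff ℝ 1 F₁) (hF₂ : ContDiff ℝ 1 F₂)
    (hF₁mono : Monotone F₁) (hF₂mono : Monotone F₂)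
    (hF₁bot : Tendsto F₁ atBot (nhds 0)) (hF₁top : Tendsto F₁ atTop (nhds 1))
    (hF₂bot : Tendsto F₂ atBot (nhds 0)) (hF₂top : Tendsto F₂ atTop (nhds 1))
    (hint : Integrable (fun p => p.2) (fgmMargins F₁ F₂ θ))
    (hint2 : Integrable (fun y => y * (1 - 2 * F₂ y) * deriv F₂ y) volume) :
    (fgmMargins F₁ F₂ θ)[Prod.snd | MeasurableSpace.comap Prod.fst Real.measurableSpace]
      =ᵐ[fgmMargins F₁ F₂ θ] fun p =>
        (∫ q, q.2 ∂(fgmMargins F₁ F₂ θ))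
          + θ * (1 - 2 * F₁ p.1) * ∫ y, y * (1 - 2 * F₂ y) * deriv F₂ y := by
  have hF₁' : IsC1CDF F₁ := ⟨hF₁, hF₁mono, hF₁bot, hF₁top⟩
  have hF₂' : IsC1CDF F₂ := ⟨hF₂, hF₂mono, hF₂bot, hF₂top⟩
  have hθ : |θ| ≤ 1 := abs_le.2 ⟨hθ₁, hθ₂⟩
  have := isProbabilityMeasure_fgmMargins hF₁' hF₂' hθ
  have hm := integrable_mul_deriv_of_integrable_snd hF₁' hF₂' hθ hint
  have hF₁c : Continuous F₁ := hF₁'.differentiable.continuous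
  have key := condExp_comp_snd_ae_eq_of_withDensity (f := fun y => y)
    (φ := fun x =>
      (∫ y, y * deriv F₂ y) + θ * (1 - 2 * F₁ x) * ∫ y, y * (1 - 2 * F₂ y) * deriv F₂ y)
    fgmMargins_eq_withDensity (continuous_fgmDensity hF₁' hF₂').measurable
    (fgmDensity_nonneg hF₁' hF₂' hθ) hint (by fun_prop : Continuous _).stronglyMeasurable
    ((integrable_const _).add
      (((hF₁'.integrable_one_sub_two_mul_comp measurable_fst).const_mul θ).mul_const _))
    (Eventually.of_forall fun x => by
      rw [integral_fgmDensity_mul_snd x hm hint2, integral_fgmDensity_snd hF₂'])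
  rw [integral_snd_fgmMargins hF₁' hF₂' hθ hint hint2]
  exact key
end

section
/- Let x_1,…,x_d be independent exponential random variables with rates λ_1,…,λ_d > 0 (so E[x_j] = 1/λ_j), and define the game val(u) = E[max_{j∈u} x_j] for nonempty u ⊆ {1,…,d}, with val(∅) = 0. Then the Shapley value of player j equals φ_j = Σ_{r=1}^{d} ((−1)^{r−1}/r) Σ_{w ⊆ {1,…,d}, j ∈ w, |w| = r} 1/(Σ_{ℓ∈w} λ_ℓ). -/
open Finset MeasureTheory ProbabilityTheory

/-- The value of a coalition `u` of random lifetimes: `E[max_{j ∈ u} x_j]`, with the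
empty coalition worth `0`. -/
noncomputable def maxVal {Ω : Type*} [MeasurableSpace Ω] (μ : Measure Ω) {d : ℕ}
    (x : Fin d → Ω → ℝ) (u : Finset (Fin d)) : ℝ :=
  if h : u.Nonempty then ∫ ω, u.sup' h (fun j => x j ω) ∂μ else 0

/-!
By max–min inclusion–exclusion, `max_{j ∈ u} x_j = ∑_{∅ ≠ w ⊆ u} (-1)^(|w|+1) min_{ℓ ∈ w} x_ℓ`, and
the minimum of independent exponential variables is exponential with rate `∑_{ℓ ∈ w} λ_ℓ`. Hence
`val u = ∑_{w ⊆ u} c w` with Harsanyi dividends `c w = (-1)^(|w|+1) / ∑_{ℓ ∈ w} λ_ℓ`. The Shapley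
value is linear in the game and gives `1/|w|` to every member of `w` in the unanimity game of `w`,
so `φ_j = ∑_{w ∋ j} c w / |w|`; grouping by `r = |w|` gives the formula.
-/

section MaxMin

variable {ι R : Type*} [CommRing R] [LinearOrder R]

def infOrZero (w : Finset ι) (f : ι → R) : R :=
  if h : w.Nonempty then w.inf' h f else 0

@[simp]
lemma infOrZero_empty (f : ι → R) : infOrZero ∅ f = 0 := rfl

lemma infOrZero_insert [DecidableEq ι] (f : ι → R) (a : ι) {w : Finset ι} (hw : w.Nonempty) :
    infOrZero (insert a w) f = infOrZero w (fun i => f a ⊓ f i) := by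
  rw [infOrZero, infOrZero, dif_pos (insert_nonempty a w), dif_pos hw, inf'_insert]
  exact apply_inf'_eq_inf'_comp hw (f a ⊓ ·) fun _ _ => inf_inf_distrib_left _ _ _

/-- Maximum–minimum inclusion–exclusion. -/
lemma sup'_eq_sum_powerset_infOrZero [DecidableEq ι] (s : Finset ι) (hs : s.Nonempty)
    (f : ι → R) :
    s.sup' hs f = ∑ w ∈ s.powerset, (-1) ^ (#w + 1) * infOrZero w f := by
  induction hs using Nonempty.cons_induction generalizing f with
  | singleton a =>
    rw [sup'_singleton, ← insert_empty_eq, sum_powerset_insert (notMem_empty a)]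
    simp [infOrZero]
  | cons a s ha hs ih =>
    have hinsert : ∀ w ∈ s.powerset,
        (-1) ^ (#(insert a w) + 1) * infOrZero (insert a w) f
          = (if w = ∅ then f a else 0)
            - (-1) ^ (#w + 1) * infOrZero w (fun i => f a ⊓ f i) := by
      intro w hw
      obtain rfl | hw₀ := w.eq_empty_or_nonempty
      · simp [infOrZero]
      rw [card_insert_of_notMem fun h => ha (mem_powerset.mp hw h), infOrZero_insert f a hw₀,
        if_neg hw₀.ne_empty]
      ring
    rw [sup'_cons hs, cons_eq_insert, sum_powerset_insert ha, sum_congr rfl hinsert,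
      sum_sub_distrib, sum_ite_eq' _ _ fun _ => f a, if_pos (empty_mem_powerset s),
      ← ih, ← ih, ← sup'_inf_distrib_left]
    linear_combination min_add_max (f a) (s.sup' hs f)

end MaxMin

section Exponential

open Set Real

lemma expMeasure_Iio_zero (r : ℝ) : expMeasure r (Iio 0) = 0 := by
  rw [expMeasure, gammaMeasure, withDensity_apply _ measurableSet_Iio]
  exact lintegral_gammaPDF_of_nonpos le_rfl

lemma expMeasure_Ioi {r : ℝ} (hr : 0 < r) {t : ℝ} (ht : 0 ≤ t) :
    expMeasure r (Ioi t) = ENNReal.ofReal (exp (-r * t)) := by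
  have := isProbabilityMeasure_expMeasure hr
  have hcdf := cdf_expMeasure_eq hr t
  rw [cdf_eq_real, if_pos ht] at hcdf
  have hle : exp (-(r * t)) ≤ 1 := exp_le_one_iff.mpr (by nlinarith)
  rw [← compl_Iic, prob_compl_eq_one_sub measurableSet_Iic, ← ofReal_measureReal, hcdf,
    ← ENNReal.ofReal_one, ← ENNReal.ofReal_sub _ (sub_nonneg.mpr hle), sub_sub_cancel, neg_mul]

variable {Ω : Type*} [MeasurableSpace Ω] {μ : Measure Ω}

lemma ae_nonneg_of_map_eq_expMeasure {X : Ω → ℝ} (hX : AEMeasurable X μ) {r : ℝ}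
    (hlaw : μ.map X = expMeasure r) : 0 ≤ᵐ[μ] X := by
  change μ {ω | ¬ 0 ≤ X ω} = 0
  simp_rw [not_le]
  rw [show {ω | X ω < 0} = X ⁻¹' Iio 0 from rfl,
    ← Measure.map_apply_of_aemeasurable hX measurableSet_Iio, hlaw]
  exact expMeasure_Iio_zero r

section Survival

variable {X : Ω → ℝ} {s : ℝ}

lemma lintegral_ofReal_eq_of_meas_lt_eq_exp (hX : AEMeasurable X μ) (hX₀ : 0 ≤ᵐ[μ] X)
    (hs : 0 < s) (hsurv : ∀ t, 0 ≤ t → μ {ω | t < X ω} = ENNReal.ofReal (exp (-s * t))) :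
    ∫⁻ ω, ENNReal.ofReal (X ω) ∂μ = ENNReal.ofReal s⁻¹ := by
  have hint : IntegrableOn (fun t => exp (-s * t)) (Ioi 0) :=
    integrableOn_exp_mul_Ioi (neg_neg_of_pos hs) 0
  rw [lintegral_eq_lintegral_meas_lt μ hX₀ hX,
    setLIntegral_congr_fun measurableSet_Ioi fun t ht => hsurv t (le_of_lt ht),
    ← ofReal_integral_eq_lintegral_ofReal hint (ae_of_all _ fun t => (exp_pos _).le),
    integral_exp_mul_Ioi (neg_neg_of_pos hs)]
  simp

lemma integrable_of_meas_lt_eq_exp (hX : AEMeasurable X μ) (hX₀ : 0 ≤ᵐ[μ] X) (hs : 0 < s)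
    (hsurv : ∀ t, 0 ≤ t → μ {ω | t < X ω} = ENNReal.ofReal (exp (-s * t))) :
    Integrable X μ :=
  ⟨hX.aestronglyMeasurable, (hasFiniteIntegral_iff_ofReal hX₀).mpr <| by
    rw [lintegral_ofReal_eq_of_meas_lt_eq_exp hX hX₀ hs hsurv]; exact ENNReal.ofReal_lt_top⟩

lemma integral_eq_inv_of_meas_lt_eq_exp (hX : AEMeasurable X μ) (hX₀ : 0 ≤ᵐ[μ] X) (hs : 0 < s)
    (hsurv : ∀ t, 0 ≤ t → μ {ω | t < X ω} = ENNReal.ofReal (exp (-s * t))) :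
    ∫ ω, X ω ∂μ = s⁻¹ := by
  rw [integral_eq_lintegral_of_nonneg_ae hX₀ hX.aestronglyMeasurable,
    lintegral_ofReal_eq_of_meas_lt_eq_exp hX hX₀ hs hsurv, ENNReal.toReal_ofReal (by positivity)]

end Survival

section MinOfExponentials

variable {ι : Type*} {x : ι → Ω → ℝ}

lemma ProbabilityTheory.iIndepFun.meas_lt_inf' (hind : iIndepFun x μ) (w : Finset ι)
    (hw : w.Nonempty) (t : ℝ) :
    μ {ω | t < w.inf' hw fun i => x i ω} = ∏ i ∈ w, μ {ω | t < x i ω} := by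
  have hset : {ω | t < w.inf' hw fun i => x i ω} = ⋂ i ∈ w, x i ⁻¹' Ioi t := by
    ext ω; simp [lt_inf'_iff]
  rw [hset, hind.meas_biInter fun i _ => ⟨Ioi t, measurableSet_Ioi, rfl⟩]
  rfl

variable {lam : ι → ℝ}

lemma meas_lt_inf'_eq_exp (hx : ∀ i, Measurable (x i)) (hind : iIndepFun x μ)
    (hlam : ∀ i, 0 < lam i) (hlaw : ∀ i, μ.map (x i) = expMeasure (lam i))
    (w : Finset ι) (hw : w.Nonempty) {t : ℝ} (ht : 0 ≤ t) :
    μ {ω | t < w.inf' hw fun i => x i ω} = ENNReal.ofReal (exp (-(∑ i ∈ w, lam i) * t)) := by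
  rw [hind.meas_lt_inf' w hw t, neg_mul, sum_mul, ← sum_neg_distrib, exp_sum,
    ENNReal.ofReal_prod_of_nonneg fun i _ => (exp_pos _).le]
  refine prod_congr rfl fun i _ => ?_
  rw [show {ω | t < x i ω} = x i ⁻¹' Ioi t from rfl, ← Measure.map_apply (hx i) measurableSet_Ioi,
    hlaw i, expMeasure_Ioi (hlam i) ht, neg_mul]

lemma measurable_finset_inf' (hx : ∀ i, Measurable (x i)) (w : Finset ι) (hw : w.Nonempty) :
    Measurable fun ω => w.inf' hw fun i => x i ω := by
  simpa only [← Finset.inf'_apply] using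
    Finset.inf'_induction hw x (p := Measurable) (fun _ hf _ hg => hf.inf hg) fun i _ => hx i

lemma ae_nonneg_inf' (hx : ∀ i, Measurable (x i)) (hlaw : ∀ i, μ.map (x i) = expMeasure (lam i))
    (w : Finset ι) (hw : w.Nonempty) : 0 ≤ᵐ[μ] fun ω => w.inf' hw fun i => x i ω := by
  have hall : ∀ᵐ ω ∂μ, ∀ i ∈ w, 0 ≤ x i ω := (Finset.eventually_all w).mpr fun i _ =>
    ae_nonneg_of_map_eq_expMeasure (hx i).aemeasurable (hlaw i)
  filter_upwards [hall] with ω hω using le_inf' hw _ hω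

lemma integrable_infOrZero (hx : ∀ i, Measurable (x i)) (hind : iIndepFun x μ)
    (hlam : ∀ i, 0 < lam i) (hlaw : ∀ i, μ.map (x i) = expMeasure (lam i)) (w : Finset ι) :
    Integrable (fun ω => infOrZero w fun i => x i ω) μ := by
  obtain rfl | hw := w.eq_empty_or_nonempty
  · simp
  simp only [infOrZero, dif_pos hw]
  exact integrable_of_meas_lt_eq_exp (measurable_finset_inf' hx w hw).aemeasurable
    (ae_nonneg_inf' hx hlaw w hw) (sum_pos (fun i _ => hlam i) hw)
    fun _ ht => meas_lt_inf'_eq_exp hx hind hlam hlaw w hw ht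

/-- At `w = ∅` both sides are junk `0`, the right one because `0⁻¹ = 0`. -/
lemma integral_infOrZero (hx : ∀ i, Measurable (x i)) (hind : iIndepFun x μ)
    (hlam : ∀ i, 0 < lam i) (hlaw : ∀ i, μ.map (x i) = expMeasure (lam i)) (w : Finset ι) :
    ∫ ω, infOrZero w (fun i => x i ω) ∂μ = (∑ i ∈ w, lam i)⁻¹ := by
  obtain rfl | hw := w.eq_empty_or_nonempty
  · simp
  simp only [infOrZero, dif_pos hw]
  exact integral_eq_inv_of_meas_lt_eq_exp (measurable_finset_inf' hx w hw).aemeasurable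
    (ae_nonneg_inf' hx hlaw w hw) (sum_pos (fun i _ => hlam i) hw)
    fun _ ht => meas_lt_inf'_eq_exp hx hind hlam hlaw w hw ht

end MinOfExponentials

end Exponential

lemma maxVal_eq_sum_powerset {Ω : Type*} [MeasurableSpace Ω] {μ : Measure Ω} {d : ℕ}
    {x : Fin d → Ω → ℝ} {lam : Fin d → ℝ} (hx : ∀ i, Measurable (x i)) (hind : iIndepFun x μ)
    (hlam : ∀ i, 0 < lam i) (hlaw : ∀ i, μ.map (x i) = expMeasure (lam i)) (u : Finset (Fin d)) :
    maxVal μ x u = ∑ w ∈ u.powerset, (-1) ^ (#w + 1) * (∑ i ∈ w, lam i)⁻¹ := by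
  obtain rfl | hu := u.eq_empty_or_nonempty
  · simp [maxVal]
  simp_rw [maxVal, dif_pos hu, sup'_eq_sum_powerset_infOrZero u hu]
  rw [integral_finsetSum _ fun w _ => (integrable_infOrZero hx hind hlam hlaw w).const_mul _]
  simp_rw [integral_const_mul, integral_infOrZero hx hind hlam hlaw]

section Shapley

lemma sum_choose_div_choose_add {K : Type*} [Field K] [CharZero K] (m k : ℕ) :
    ∑ i ∈ range (k + 1), (k.choose i : K) / (m + k).choose (m + i) = (m + k + 1) / (m + 1) := by
  have hterm : ∀ i ∈ range (k + 1),
      (k.choose i : K) / (m + k).choose (m + i) = (i + m).choose m / (m + k).choose m := by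
    intro i hi
    have hi : m + i ≤ m + k := by simp only [mem_range] at hi; omega
    rw [div_eq_div_iff (by exact_mod_cast (Nat.choose_pos hi).ne')
      (by exact_mod_cast (Nat.choose_pos (Nat.le_add_right m k)).ne')]
    have := Nat.choose_mul (n := m + k) (Nat.le_add_right m i)
    rw [Nat.add_sub_cancel_left, Nat.add_sub_cancel_left] at this
    rw [add_comm i m]
    norm_cast
    linarith
  rw [sum_congr rfl hterm, ← sum_div, ← Nat.cast_sum, Nat.sum_range_add_choose,
    div_eq_div_iff (by exact_mod_cast (Nat.choose_pos (Nat.le_add_right m k)).ne')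
      (Nat.cast_add_one_ne_zero m), add_comm k m]
  exact_mod_cast (Nat.add_one_mul_choose_eq (m + k) m).symm

lemma sum_Icc_inv_choose_card {α K : Type*} [DecidableEq α] [Field K] [CharZero K]
    {t E : Finset α} (h : t ⊆ E) :
    ∑ u ∈ Icc t E, ((#E).choose #u : K)⁻¹ = (#E + 1) / (#t + 1) := by
  have hdisj : ∀ v ∈ (E \ t).powerset, Disjoint t v := fun v hv =>
    disjoint_of_subset_right (mem_powerset.mp hv) disjoint_sdiff
  have hinj : Set.InjOn (t ∪ ·) (E \ t).powerset := fun v₁ hv₁ v₂ hv₂ heq => by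
    dsimp only at heq
    rw [← union_sdiff_cancel_left (hdisj v₁ hv₁), heq, union_sdiff_cancel_left (hdisj v₂ hv₂)]
  have hE : #E = #t + #(E \ t) := by
    rw [card_sdiff_of_subset h]; have := card_le_card h; omega
  rw [Icc_eq_image_powerset h, sum_image hinj,
    sum_congr rfl fun v hv => by rw [card_union_of_disjoint (hdisj v hv)],
    sum_powerset_apply_card fun i => ((#E).choose (#t + i) : K)⁻¹, hE]
  simp_rw [nsmul_eq_mul, ← div_eq_mul_inv]
  push_cast
  exact sum_choose_div_choose_add (#t) (#(E \ t))

variable {d : ℕ}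

def unanimityGame (w u : Finset (Fin d)) : ℝ := if w ⊆ u then 1 else 0

lemma shapley_sum_mul {α : Type*} (s : Finset α) (c : α → ℝ) (v : α → Finset (Fin d) → ℝ)
    (j : Fin d) :
    shapley (fun u => ∑ a ∈ s, c a * v a u) j = ∑ a ∈ s, c a * shapley (v a) j := by
  simp only [shapley, ← sum_sub_distrib, ← mul_sub, mul_sum]
  rw [sum_comm]
  exact sum_congr rfl fun _ _ => sum_congr rfl fun _ _ => by ring

lemma shapley_unanimityGame_of_mem {w : Finset (Fin d)} {j : Fin d} (hj : j ∈ w) :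
    shapley (unanimityGame w) j = (#w : ℝ)⁻¹ := by
  have hmarg : ∀ u ∈ (univ.erase j).powerset,
      unanimityGame w (insert j u) - unanimityGame w u = if w.erase j ⊆ u then 1 else 0 := by
    intro u hu
    have hw : ¬ w ⊆ u := fun h => (mem_erase.mp (mem_powerset.mp hu (h hj))).1 rfl
    simp [unanimityGame, subset_insert_iff, hw]
  have hIcc : {u ∈ (univ.erase j).powerset | w.erase j ⊆ u} = Icc (w.erase j) (univ.erase j) := by
    ext u; simp [and_comm]
  have hE : #(univ.erase j) = d - 1 := by simp
  have hd : 1 ≤ d := Fin.pos j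
  have hw : 1 ≤ #w := card_pos.mpr ⟨j, hj⟩
  rw [shapley, sum_congr rfl fun u hu => by rw [hmarg u hu]]
  simp only [mul_ite, mul_one, mul_zero]
  rw [← sum_filter, hIcc, ← hE, sum_Icc_inv_choose_card (erase_subset_erase j (subset_univ w)),
    hE, card_erase_of_mem hj, Nat.cast_sub hd, Nat.cast_sub hw, Nat.cast_one, sub_add_cancel,
    sub_add_cancel, inv_mul_eq_div, div_div_cancel_left' (Nat.cast_ne_zero.mpr (by omega))]

lemma shapley_unanimityGame_of_notMem {w : Finset (Fin d)} {j : Fin d} (hj : j ∉ w) :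
    shapley (unanimityGame w) j = 0 := by
  simp [shapley, unanimityGame, subset_insert_iff_of_notMem hj]

lemma shapley_sum_powerset (c : Finset (Fin d) → ℝ) (j : Fin d) :
    shapley (fun u => ∑ w ∈ u.powerset, c w) j = ∑ w ∈ univ.powerset with j ∈ w, c w / #w := by
  have hgame : (fun u => ∑ w ∈ u.powerset, c w)
      = fun u => ∑ w ∈ univ.powerset, c w * unanimityGame w u := by
    ext u
    simp only [unanimityGame, mul_ite, mul_one, mul_zero, ← sum_filter]
    congr 1; ext w; simp
  rw [hgame, shapley_sum_mul, sum_filter]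
  refine sum_congr rfl fun w _ => ?_
  by_cases hj : j ∈ w
  · rw [if_pos hj, shapley_unanimityGame_of_mem hj, div_eq_mul_inv]
  · rw [if_neg hj, shapley_unanimityGame_of_notMem hj, mul_zero]

end Shapley

theorem shapley_max_exponential_general
    {Ω : Type*} [MeasurableSpace Ω] (μ : Measure Ω)
    (d : ℕ) (x : Fin d → Ω → ℝ) (hx : ∀ j, Measurable (x j))
    (lam : Fin d → ℝ) (hlam : ∀ j, 0 < lam j)
    (hind : iIndepFun x μ)
    (hlaw : ∀ j, μ.map (x j) = expMeasure (lam j)) (j : Fin d) :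
    shapley (maxVal μ x) j
      = ∑ r ∈ Finset.Icc 1 d, ((-1 : ℝ) ^ (r - 1) / r)
          * ∑ w ∈ Finset.univ.powerset.filter (fun w => j ∈ w ∧ w.card = r),
              (∑ ℓ ∈ w, lam ℓ)⁻¹ := by
  have hcard : ∀ w ∈ univ.powerset.filter (j ∈ ·), #w ∈ Icc 1 d := fun w hw =>
    mem_Icc.mpr ⟨card_pos.mpr ⟨j, (mem_filter.mp hw).2⟩, card_le_univ w |>.trans_eq (by simp)⟩
  rw [funext (maxVal_eq_sum_powerset hx hind hlam hlaw), shapley_sum_powerset,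
    ← sum_fiberwise_of_maps_to hcard]
  refine sum_congr rfl fun r hr => ?_
  rw [filter_filter, mul_sum]
  refine sum_congr rfl fun w hw => ?_
  obtain ⟨-, rfl⟩ := (mem_filter.mp hw).2
  obtain ⟨k, hk⟩ : ∃ k, #w = k + 1 := Nat.exists_eq_add_one.mpr (mem_Icc.mp hr).1
  rw [hk, Nat.add_sub_cancel]
  ring

/-- Shapley value for the game `val u = E[max_{j∈u} x_j]` with independent exponential
lifetimes of rates `λ_j`:
`φ_j = ∑_{r=1}^d ((-1)^{r-1}/r) ∑_{w ∋ j, |w| = r} 1/(∑_{ℓ∈w} λ_ℓ)`. -/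
theorem shapley_max_exponential
    {Ω : Type*} [MeasurableSpace Ω] (μ : Measure Ω) [IsProbabilityMeasure μ]
    (d : ℕ) (x : Fin d → Ω → ℝ) (hx : ∀ j, Measurable (x j))
    (lam : Fin d → ℝ) (hlam : ∀ j, 0 < lam j)
    (hind : iIndepFun x μ)
    (hlaw : ∀ j, μ.map (x j) = expMeasure (lam j)) (j : Fin d) :
    shapley (maxVal μ x) j
      = ∑ r ∈ Finset.Icc 1 d, ((-1 : ℝ) ^ (r - 1) / r)
          * ∑ w ∈ Finset.univ.powerset.filter (fun w => j ∈ w ∧ w.card = r),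
              (∑ ℓ ∈ w, lam ℓ)⁻¹ :=
  shapley_max_exponential_general μ d x hx lam hlam hind hlaw j
end
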